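/- arXiv:1805.00725 — 2 statements merged into one kernel-verified Lean document; each statement's English description precedes it below -/
import Mathlib

section
/- Let $-\Delta$ be a one-particle Laplacian on a compact metric graph whose vertex matrix $L$ is negative semi-definite, so that $-\Delta \ge 0$ for all total lengths $\mathcal{L}$, with eigenvalue counting function satisfying the one-dimensional Weyl law $N(\lambda) \sim \frac{\mathcal{L}}{\pi}\sqrt{\lambda}$. Then for any fixed $\beta > 0$ and $\rho > 0$, no eigenstate is macroscopically occupied in the thermodynamic limit: $\limsup_{\mathcal{L}\to\infty}\rho_n(\beta,\mu_\mathcal{L}) = 0$ for every $n$. -/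
open Real Filter Set

/-- `e^x - 1 ≤ x * e^x` for all real `x`. -/
lemma exp_sub_one_le_mul_exp (x : ℝ) : Real.exp x - 1 ≤ x * Real.exp x := by
  have h := Real.add_one_le_exp (-x)
  have hx := Real.exp_pos x
  have hmul : Real.exp (-x) * Real.exp x = 1 := by
    rw [← Real.exp_add]; simp
  nlinarith

set_option maxHeartbeats 1000000 in
/-- Absence of BEC for a free Bose gas on a compact metric graph whose vertex
matrix `L` is negative semi-definite, so that all one-particle eigenvalues
`k 𝓛 n` (in increasing order) are nonnegative for every total length `𝓛`,
with the one-dimensional Weyl law `#{n : kₙ²(𝓛) ≤ λ} / 𝓛 → √λ/π`.  For every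
inverse temperature `β > 0` and density `ρ > 0`, and every choice of chemical
potentials `μ 𝓛 < k 𝓛 0` solving the density constraint, no eigenstate is
macroscopically occupied in the thermodynamic limit. -/
theorem freeBoseGasNoBEC (β ρ : ℝ) (hβ : 0 < β) (hρ : 0 < ρ)
    (k : ℝ → ℕ → ℝ)
    (hnonneg : ∀ 𝓛 n, 0 ≤ k 𝓛 n)
    (hmono : ∀ 𝓛 m n, m ≤ n → k 𝓛 m ≤ k 𝓛 n)
    (hweyl : ∀ lam : ℝ, 0 < lam →
      Tendsto (fun 𝓛 => (({n : ℕ | k 𝓛 n ≤ lam}.ncard : ℝ)) / 𝓛)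
        atTop (nhds (Real.sqrt lam / π)))
    (μ : ℝ → ℝ)
    (hμ : ∀ 𝓛 > (0 : ℝ), μ 𝓛 < k 𝓛 0)
    (hdens : ∀ 𝓛 > (0 : ℝ),
      Summable (fun n : ℕ => 1 / (Real.exp (β * (k 𝓛 n - μ 𝓛)) - 1)) ∧
      (1 / 𝓛) * ∑' n : ℕ, 1 / (Real.exp (β * (k 𝓛 n - μ 𝓛)) - 1) = ρ) :
    ∀ n : ℕ,
      Filter.limsup
        (fun 𝓛 => (1 / 𝓛) * (1 / (Real.exp (β * (k 𝓛 n - μ 𝓛)) - 1))) atTop = 0 := by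
  -- basic positivity facts about a single occupation number
  have hEgt : ∀ 𝓛 > (0:ℝ), ∀ n : ℕ, 1 < Real.exp (β * (k 𝓛 n - μ 𝓛)) := by
    intro 𝓛 h𝓛 n
    have h0 : μ 𝓛 < k 𝓛 n := lt_of_lt_of_le (hμ 𝓛 h𝓛) (hmono 𝓛 0 n (Nat.zero_le n))
    have : 0 < β * (k 𝓛 n - μ 𝓛) := by nlinarith
    calc (1:ℝ) = Real.exp 0 := by simp
      _ < Real.exp (β * (k 𝓛 n - μ 𝓛)) := Real.exp_lt_exp.2 this
  -- Step 1: the ground-state occupation density tends to 0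
  have key : Tendsto (fun 𝓛 => (1 / 𝓛) * (1 / (Real.exp (β * (k 𝓛 0 - μ 𝓛)) - 1)))
      atTop (nhds 0) := by
    have hnn : ∀ᶠ 𝓛 in atTop,
        0 ≤ (1 / 𝓛) * (1 / (Real.exp (β * (k 𝓛 0 - μ 𝓛)) - 1)) := by
      filter_upwards [eventually_gt_atTop (0:ℝ)] with 𝓛 h𝓛
      have h1 := hEgt 𝓛 h𝓛 0
      exact mul_nonneg (one_div_nonneg.2 h𝓛.le) (one_div_nonneg.2 (by linarith))
    have hlt : ∀ ε > (0:ℝ), ∀ᶠ 𝓛 in atTop,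
        (1 / 𝓛) * (1 / (Real.exp (β * (k 𝓛 0 - μ 𝓛)) - 1)) < ε := by
      intro ε hε
      have hπ := Real.pi_pos
      -- choose a small spectral cutoff lam
      set c : ℝ := 4 * π * ρ * β * Real.exp (2 * β) + 1 with hc_def
      have hc : 0 < c := by positivity
      set lam : ℝ := min 1 ((1 / c) ^ 2) with hlam_def
      have hlam : 0 < lam := lt_min one_pos (by positivity)
      have hlam1 : lam ≤ 1 := min_le_left _ _
      have hsqpos : 0 < Real.sqrt lam := Real.sqrt_pos.2 hlam
      have hsq : Real.sqrt lam ≤ 1 / c := by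
        have h1 : lam ≤ (1 / c) ^ 2 := min_le_right _ _
        have h2 : Real.sqrt lam ≤ Real.sqrt ((1 / c) ^ 2) := Real.sqrt_le_sqrt h1
        rwa [Real.sqrt_sq (by positivity)] at h2
      have hcs' : Real.sqrt lam * (4 * π * ρ * β * Real.exp (2 * β) + 1) ≤ 1 := by
        have := mul_le_mul_of_nonneg_right hsq hc.le
        rw [one_div_mul_cancel hc.ne'] at this
        calc Real.sqrt lam * (4 * π * ρ * β * Real.exp (2 * β) + 1)
            = Real.sqrt lam * c := by rw [hc_def]
          _ ≤ 1 := this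
      -- the key numeric inequality
      have hnum : ρ * (Real.exp (2 * β * lam) - 1) < Real.sqrt lam / (2 * π) := by
        have h1 : Real.exp (2 * β * lam) - 1 ≤ (2 * β * lam) * Real.exp (2 * β * lam) :=
          exp_sub_one_le_mul_exp _
        have h2 : Real.exp (2 * β * lam) ≤ Real.exp (2 * β) := by
          apply Real.exp_le_exp.2; nlinarith
        have hexppos := Real.exp_pos (2 * β * lam)
        have hA : ρ * (Real.exp (2 * β * lam) - 1) ≤
            2 * ρ * β * Real.exp (2 * β) * (Real.sqrt lam * Real.sqrt lam) := by
          rw [Real.mul_self_sqrt hlam.le]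
          nlinarith [mul_le_mul_of_nonneg_left h1 hρ.le,
            mul_le_mul_of_nonneg_left h2 (by positivity : (0:ℝ) ≤ 2 * ρ * β * lam)]
        have hB : 4 * π * ρ * β * Real.exp (2 * β) * Real.sqrt lam < 1 := by
          nlinarith [hcs', hsqpos]
        rw [lt_div_iff₀ (by positivity : (0:ℝ) < 2 * π)]
        nlinarith [mul_le_mul_of_nonneg_right hA (by positivity : (0:ℝ) ≤ 2 * π),
          mul_lt_mul_of_pos_right hB hsqpos]
      have hweyl' : ∀ᶠ 𝓛 in atTop,
          Real.sqrt lam / (2 * π) < (({n : ℕ | k 𝓛 n ≤ lam}.ncard : ℝ)) / 𝓛 :=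
        (hweyl lam hlam).eventually (eventually_gt_nhds (by
          rw [div_lt_div_iff₀ (by positivity) hπ]; nlinarith))
      filter_upwards [eventually_ge_atTop (max 1 (1 / (β * ε * lam))), hweyl'] with 𝓛 h1 h2
      have h𝓛1 : (1:ℝ) ≤ 𝓛 := le_trans (le_max_left _ _) h1
      have h𝓛pos : (0:ℝ) < 𝓛 := lt_of_lt_of_le one_pos h𝓛1
      by_contra hcon
      push_neg at hcon
      -- from macroscopic occupation, μ 𝓛 ≥ -lam
      have hE := hEgt 𝓛 h𝓛pos 0
      have hμlam : -lam ≤ μ 𝓛 := by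
        have hle : β * ε * 𝓛 * lam ≥ 1 := by
          have h2' : 1 / (β * ε * lam) ≤ 𝓛 := le_trans (le_max_right _ _) h1
          rw [div_le_iff₀ (by positivity)] at h2'
          nlinarith
        have hEm1 : 0 < Real.exp (β * (k 𝓛 0 - μ 𝓛)) - 1 := by linarith
        -- E - 1 ≤ 1/(ε𝓛)
        have hE1 : Real.exp (β * (k 𝓛 0 - μ 𝓛)) - 1 ≤ 1 / (ε * 𝓛) := by
          rw [le_div_iff₀ (by positivity)]
          have h' : ε * (Real.exp (β * (k 𝓛 0 - μ 𝓛)) - 1) ≤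
              (1 / 𝓛) * (1 / (Real.exp (β * (k 𝓛 0 - μ 𝓛)) - 1)) *
                (Real.exp (β * (k 𝓛 0 - μ 𝓛)) - 1) :=
            mul_le_mul_of_nonneg_right hcon hEm1.le
          rw [mul_assoc, one_div_mul_cancel hEm1.ne', mul_one] at h'
          nlinarith [mul_le_mul_of_nonneg_right h' h𝓛pos.le, one_div_mul_cancel h𝓛pos.ne']
        have hE2 : Real.exp (β * (k 𝓛 0 - μ 𝓛)) ≤ Real.exp (1 / (ε * 𝓛)) := by
          have := Real.add_one_le_exp (1 / (ε * 𝓛))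
          linarith
        have hE3 : β * (k 𝓛 0 - μ 𝓛) ≤ 1 / (ε * 𝓛) := Real.exp_le_exp.1 hE2
        have hk0 := hnonneg 𝓛 0
        have : 1 / (ε * 𝓛) ≤ β * lam := by
          rw [div_le_iff₀ (by positivity)]; nlinarith
        nlinarith
      -- the set of low eigenvalues
      set S : Set ℕ := {n : ℕ | k 𝓛 n ≤ lam} with hS_def
      have hSnc : S.ncard ≠ 0 := by
        intro h0
        rw [h0] at h2
        norm_num at h2
        have : 0 < Real.sqrt lam / (2 * π) := by positivity
        linarith
      have hSpos : 0 < (S.ncard : ℝ) := by exact_mod_cast Nat.pos_of_ne_zero hSnc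
      have hSfin : S.Finite := by
        by_contra hinf
        exact hSnc (Set.Infinite.ncard hinf)
      have hSne : S.Nonempty := Set.nonempty_of_ncard_ne_zero hSnc
      -- 0 ∈ S, hence μ 𝓛 < lam
      obtain ⟨n₀, hn₀⟩ := hSne
      have h0S : k 𝓛 0 ≤ lam := le_trans (hmono 𝓛 0 n₀ (Nat.zero_le _)) hn₀
      have hμlt : μ 𝓛 < lam := lt_of_lt_of_le (hμ 𝓛 h𝓛pos) h0S
      -- each low mode has occupation ≥ 1/(e^{2βλ}-1)
      have hc0pos : 0 < Real.exp (2 * β * lam) - 1 := by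
        have h0 : (0:ℝ) < 2 * β * lam := by positivity
        have := Real.exp_lt_exp.2 h0
        simp only [Real.exp_zero] at this
        linarith
      have hlow : ∀ n ∈ hSfin.toFinset,
          1 / (Real.exp (2 * β * lam) - 1) ≤
            1 / (Real.exp (β * (k 𝓛 n - μ 𝓛)) - 1) := by
        intro n hn
        rw [Set.Finite.mem_toFinset] at hn
        have hkn : k 𝓛 n ≤ lam := hn
        have hEn := hEgt 𝓛 h𝓛pos n
        apply one_div_le_one_div_of_le (by linarith)
        have h3 : β * (k 𝓛 n - μ 𝓛) ≤ 2 * β * lam := by nlinarith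
        have := Real.exp_le_exp.2 h3
        linarith
      obtain ⟨hsumm, hdens𝓛⟩ := hdens 𝓛 h𝓛pos
      have hcard_sum : (S.ncard : ℝ) * (1 / (Real.exp (2 * β * lam) - 1)) ≤
          ∑ n ∈ hSfin.toFinset, 1 / (Real.exp (β * (k 𝓛 n - μ 𝓛)) - 1) := by
        have h4 := Finset.card_nsmul_le_sum hSfin.toFinset
          (fun n => 1 / (Real.exp (β * (k 𝓛 n - μ 𝓛)) - 1))
          (1 / (Real.exp (2 * β * lam) - 1)) hlow
        rw [nsmul_eq_mul] at h4
        rwa [Set.ncard_eq_toFinset_card _ hSfin]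
      have hsum_tsum : ∑ n ∈ hSfin.toFinset, 1 / (Real.exp (β * (k 𝓛 n - μ 𝓛)) - 1) ≤
          ∑' n : ℕ, 1 / (Real.exp (β * (k 𝓛 n - μ 𝓛)) - 1) := by
        apply Summable.sum_le_tsum _ _ hsumm
        intro n _
        have hEn := hEgt 𝓛 h𝓛pos n
        exact one_div_nonneg.2 (by linarith)
      -- assemble the contradiction: ρ > ρ
      have hfinal : Real.sqrt lam / (2 * π) * (1 / (Real.exp (2 * β * lam) - 1)) < ρ := by
        calc Real.sqrt lam / (2 * π) * (1 / (Real.exp (2 * β * lam) - 1))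
            < ((S.ncard : ℝ) / 𝓛) * (1 / (Real.exp (2 * β * lam) - 1)) := by
              apply mul_lt_mul_of_pos_right h2 (by positivity)
          _ = (1 / 𝓛) * ((S.ncard : ℝ) * (1 / (Real.exp (2 * β * lam) - 1))) := by ring
          _ ≤ (1 / 𝓛) * ∑' n : ℕ, 1 / (Real.exp (β * (k 𝓛 n - μ 𝓛)) - 1) := by
              apply mul_le_mul_of_nonneg_left _ (by positivity)
              exact le_trans hcard_sum hsum_tsum
          _ = ρ := hdens𝓛
      have hcontr : ρ < Real.sqrt lam / (2 * π) * (1 / (Real.exp (2 * β * lam) - 1)) := by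
        have h5 := mul_lt_mul_of_pos_right hnum
          (one_div_pos.2 hc0pos)
        rw [mul_assoc, mul_one_div, div_self hc0pos.ne', mul_one] at h5
        exact h5
      linarith
    rw [tendsto_order]
    constructor
    · intro a ha
      filter_upwards [hnn] with 𝓛 h using lt_of_lt_of_le ha h
    · intro a ha
      exact hlt a ha
  -- Step 2: squeeze each mode between 0 and the ground state occupation
  intro n
  have hten : Tendsto (fun 𝓛 => (1 / 𝓛) * (1 / (Real.exp (β * (k 𝓛 n - μ 𝓛)) - 1)))
      atTop (nhds 0) := by
    apply tendsto_of_tendsto_of_tendsto_of_le_of_le' tendsto_const_nhds key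
    · filter_upwards [eventually_gt_atTop (0:ℝ)] with 𝓛 h𝓛
      have hEn := hEgt 𝓛 h𝓛 n
      exact mul_nonneg (one_div_nonneg.2 h𝓛.le) (one_div_nonneg.2 (by linarith))
    · filter_upwards [eventually_gt_atTop (0:ℝ)] with 𝓛 h𝓛
      have hE0 := hEgt 𝓛 h𝓛 0
      have hEn := hEgt 𝓛 h𝓛 n
      apply mul_le_mul_of_nonneg_left _ (by positivity)
      apply one_div_le_one_div_of_le (by linarith)
      have h3 : β * (k 𝓛 0 - μ 𝓛) ≤ β * (k 𝓛 n - μ 𝓛) := by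
        have := hmono 𝓛 0 n (Nat.zero_le n)
        nlinarith
      have := Real.exp_le_exp.2 h3
      linarith
  exact hten.limsup_eq
end

section
/- For the effective surface-defect Hamiltonian with single-pair energies $E_n(L)$ (bulk, $E_0(L) \to E_0 > 0$, $E_n(L) \ge E_1 > E_0$ for $n \ge 1$) and shifted discrete eigenvalues $\lambda_k(L) + \lambda\rho_s - \alpha$ (surface, with $\lambda_1(L) = 0$), in the thermodynamic limit with inverse defect density $\delta = \lim_{L\to\infty} L/n(L) > 0$: if $2\lambda\delta\rho < E_0 + \alpha$, then no bulk eigenstate is macroscopically occupied; in particular, if $\lambda = 0$ (and $\alpha \geq -E_0$ nondegenerate), the bulk condensate is destroyed for every pair density $\rho > 0$. -/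
open Filter Real

noncomputable section

/-- Bose–Einstein occupation factor `(e^{β(x-μ)} - 1)⁻¹`. -/
def bose (β μ x : ℝ) : ℝ := 1 / (Real.exp (β * (x - μ)) - 1)

lemma bose_nonneg {β μ x : ℝ} (hβ : 0 < β) (h : μ < x) : 0 ≤ bose β μ x := by
  have h1 : (1:ℝ) < Real.exp (β * (x - μ)) := by
    rw [show (1:ℝ) = Real.exp 0 by simp]
    exact Real.exp_lt_exp.mpr (mul_pos hβ (sub_pos.mpr h))
  exact div_nonneg zero_le_one (by linarith)

lemma bose_le {β μ x ε : ℝ} (hβ : 0 < β) (hε : 0 < ε) (h : ε ≤ x - μ) :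
    bose β μ x ≤ 1 / (β * ε) := by
  have h1 : β * ε ≤ Real.exp (β * (x - μ)) - 1 := by
    have h2 := Real.add_one_le_exp (β * (x - μ))
    nlinarith
  exact one_div_le_one_div_of_le (by positivity) h1

/-- Surface-defect model: effective non-interacting pair Hamiltonian with bulk
single-pair energies `Ebulk L n` (gap: `Ebulk L 0 → E0`, `Ebulk L n ≥ E1 > E0`
for `n ≥ 1`) and surface energies `lamS L k + λ ρ_s(μ_L,L) - α` (with
`lamS L 0 = 0`), `n(L)` defects of inverse density `δ = lim L/n(L) > 0`, surface
tension `α ≥ 0`, mean-field repulsion `λ ≥ 0`, chemical potential `μ_L` fixed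
by the total pair density `ρ` and self-consistent surface density `ρ_s`.
If `2λδρ < E0 + α`, then no bulk eigenstate is macroscopically occupied in the
thermodynamic limit; in particular for `λ = 0` the bulk condensate is
destroyed for every pair density `ρ > 0`. -/
theorem surfaceDefectsDestroyCondensate
    (β α lam δ ρ E0 E1 : ℝ)
    (hβ : 0 < β) (hα : 0 ≤ α) (hlam : 0 ≤ lam) (hδ : 0 < δ) (hρ : 0 < ρ)
    (hE0 : 0 < E0) (hgap : E0 < E1)
    (Ebulk : ℝ → ℕ → ℝ)
    (hE0lim : Tendsto (fun L => Ebulk L 0) atTop (nhds E0))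
    (hEn : ∀ L n, 1 ≤ n → E1 ≤ Ebulk L n)
    (lamS : ℝ → ℕ → ℝ) (hlamS0 : ∀ L, lamS L 0 = 0) (hlamSnn : ∀ L k, 0 ≤ lamS L k)
    (nD : ℝ → ℕ)
    (hdef : Tendsto (fun L => L / (nD L : ℝ)) atTop (nhds δ))
    (μ ρs : ℝ → ℝ)
    (hμ : ∀ L > (0 : ℝ), μ L < min (lam * ρs L - α) (Ebulk L 0))
    (hρs : ∀ L > (0 : ℝ), ρs L = (1 / (nD L : ℝ)) *
      ∑ k ∈ Finset.range (nD L), bose β (μ L) (lamS L k + lam * ρs L - α))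
    (hsum : ∀ L > (0 : ℝ), Summable fun n : ℕ => bose β (μ L) (Ebulk L n))
    (hdens : ∀ L > (0 : ℝ),
      (1 / L) * ((∑' n : ℕ, bose β (μ L) (Ebulk L n)) +
        ∑ k ∈ Finset.range (nD L), bose β (μ L) (lamS L k + lam * ρs L - α)) = ρ)
    (hcrit : 2 * lam * δ * ρ < E0 + α) :
    ∀ n : ℕ,
      Filter.limsup (fun L => (1 / L) * bose β (μ L) (Ebulk L n)) atTop = 0 := by
  intro n
  have hlamnn : 0 ≤ lam * ρ * δ := by positivity
  have hA : lam * ρ * δ - α < E0 := by nlinarith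
  set M : ℝ := ((lam * ρ * δ - α) + E0) / 2 with hMdef
  have hM1 : lam * ρ * δ - α < M := by rw [hMdef]; linarith
  have hM2 : M < E0 := by rw [hMdef]; linarith
  set ε1 : ℝ := (E0 - M) / 2 with hε1def
  have hε1 : 0 < ε1 := by rw [hε1def]; linarith
  have htend : Tendsto (fun L => lam * ρ * (L / (nD L : ℝ)) - α) atTop
      (nhds (lam * ρ * δ - α)) := (hdef.const_mul (lam * ρ)).sub_const α
  have hev1 : ∀ᶠ L in atTop, lam * ρ * (L / (nD L : ℝ)) - α < M :=
    htend.eventually_lt_const hM1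
  have hev2 : ∀ᶠ L in atTop, Ebulk L 0 < E1 := hE0lim.eventually_lt_const hgap
  have hev3 : ∀ᶠ L in atTop, M + ε1 < Ebulk L 0 :=
    hE0lim.eventually_const_lt (by rw [hε1def]; linarith)
  have hev4 : ∀ᶠ L in atTop, (0:ℝ) < L / (nD L : ℝ) := hdef.eventually_const_lt hδ
  have hev5 : ∀ᶠ L in atTop, (0:ℝ) < L := eventually_gt_atTop 0
  have hbound : ∀ᶠ L in atTop,
      0 ≤ (1 / L) * bose β (μ L) (Ebulk L n) ∧
      (1 / L) * bose β (μ L) (Ebulk L n) ≤ (1 / L) * (1 / (β * ε1)) := by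
    filter_upwards [hev1, hev2, hev3, hev4, hev5] with L h1 h2 h3 h4 hL
    have hnD : (0:ℝ) < (nD L : ℝ) := by
      by_contra h
      push_neg at h
      have h0 : (nD L : ℝ) = 0 := le_antisymm h (Nat.cast_nonneg _)
      rw [h0, div_zero] at h4
      exact lt_irrefl 0 h4
    have hμL := hμ L hL
    have hμ0 : μ L < Ebulk L 0 := lt_of_lt_of_le hμL (min_le_right _ _)
    have hμs : μ L < lam * ρs L - α := lt_of_lt_of_le hμL (min_le_left _ _)
    set S : ℝ := ∑ k ∈ Finset.range (nD L), bose β (μ L) (lamS L k + lam * ρs L - α)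
      with hSdef
    set T : ℝ := ∑' m : ℕ, bose β (μ L) (Ebulk L m) with hTdef
    have hS : 0 ≤ S := by
      apply Finset.sum_nonneg
      intro k _
      exact bose_nonneg hβ (by linarith [hlamSnn L k])
    have hT : 0 ≤ T := by
      apply tsum_nonneg
      intro m
      rcases Nat.eq_zero_or_pos m with rfl | hm
      · exact bose_nonneg hβ hμ0
      · exact bose_nonneg hβ (by linarith [hEn L m hm])
    have hSval : (nD L : ℝ) * ρs L = S := by
      rw [hρs L hL, one_div, ← mul_assoc, mul_inv_cancel₀ hnD.ne', one_mul]
    have h7 : (1 / L) * ((nD L : ℝ) * ρs L) ≤ ρ := by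
      rw [hSval]
      calc (1 / L) * S ≤ (1 / L) * (T + S) :=
            mul_le_mul_of_nonneg_left (by linarith) (by positivity)
        _ = ρ := hdens L hL
    have h7' : (nD L : ℝ) * ρs L ≤ ρ * L := by
      rw [one_div_mul_eq_div, div_le_iff₀ hL] at h7
      exact h7
    have h8 : ρs L ≤ ρ * (L / (nD L : ℝ)) := by
      rw [← mul_div_assoc, le_div_iff₀ hnD]
      calc ρs L * (nD L : ℝ) = (nD L : ℝ) * ρs L := mul_comm _ _
        _ ≤ ρ * L := h7'
    have hμM : μ L < M := by
      have h9 := mul_le_mul_of_nonneg_left h8 hlam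
      nlinarith
    have hgapn : ε1 ≤ Ebulk L n - μ L := by
      rcases Nat.eq_zero_or_pos n with rfl | hn
      · linarith
      · have := hEn L n hn
        have hE0eq : E0 = M + 2 * ε1 := by rw [hε1def]; ring
        linarith
    constructor
    · exact mul_nonneg (by positivity) (bose_nonneg hβ (by linarith))
    · exact mul_le_mul_of_nonneg_left (bose_le hβ hε1 hgapn) (by positivity)
  have hupper : Tendsto (fun L : ℝ => (1 / L) * (1 / (β * ε1))) atTop (nhds 0) := by
    have h := tendsto_inv_atTop_zero.mul_const (1 / (β * ε1))
    simpa [one_div] using h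
  have htends : Tendsto (fun L => (1 / L) * bose β (μ L) (Ebulk L n)) atTop (nhds 0) :=
    tendsto_of_tendsto_of_tendsto_of_le_of_le' tendsto_const_nhds hupper
      (hbound.mono fun L h => h.1) (hbound.mono fun L h => h.2)
  exact htends.limsup_eq
end
end
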